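/- arXiv:2208.14673 — 2 statements merged into one kernel-verified Lean document; each statement's English description precedes it below -/
import Mathlib

section
/- Assume (A1) r = Xᵀy has all coordinates strictly positive and (A2) M_{ij} ≤ 0 for all i ≠ j, where M = XᵀX. Then for every subset I ⊆ {1,…,d}: the principal submatrix M_{II} is invertible, the vector (M_{II})⁻¹ r_I has all coordinates strictly positive, and the vector θ_*^{(I)} ∈ ℝ^d defined by (θ_*^{(I)})_I = (M_{II})⁻¹ r_I and (θ_*^{(I)})_i = 0 for i ∉ I is a nonnegative fixed point of the vector field Ψ(θ)_i = θ_i (r_i − (Mθ)_i), i.e. θ_{*,i}^{(I)} (r_i − (M θ_*^{(I)})_i) = 0 for all i, and its support {i : θ_{*,i}^{(I)} > 0} equals I. -/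
open Matrix

/-!
Write `A = Bᵀ B` and `c = Bᵀ y` for the Gram matrix and correlation vector of a column subset
`B` of `X`, so that `A` is positive semidefinite with nonpositive off-diagonal entries and `c > 0`.
Off-diagonal signs give `|v|ᵀ A |v| ≤ vᵀ A v`; hence `A v = 0` forces `B |v| = 0`, so
`cᵀ |v| = yᵀ B |v| = 0` and `v = 0`, and `A` is invertible. For `θ = A⁻¹ c`, pairing
`A θ = c` with the negative part `θ⁻` gives `cᵀ θ⁻ = θ⁻ᵀ A θ⁺ - θ⁻ᵀ A θ⁻ ≤ 0`, so `θ⁻ = 0`;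
then `c i ≤ A i i * θ i` shows that no coordinate of `θ` vanishes. Extending `θ` by zero
solves `(M θ)_i = r_i` on `I`, which is the fixed-point equation.
-/

/-- The principal submatrix `M_{II}` of `M` indexed by a subset `I`. -/
def subMat {d : ℕ} (M : Matrix (Fin d) (Fin d) ℝ) (I : Finset (Fin d)) :
    Matrix I I ℝ := fun a b => M a b

/-- The subvector `r_I` of `r` indexed by a subset `I`. -/
def subVec {d : ℕ} (r : Fin d → ℝ) (I : Finset (Fin d)) : I → ℝ :=
  fun a => r a

/-- The candidate fixed point `θ_*^{(I)}` supported on `I`,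
with `(θ_*^{(I)})_I = (M_{II})⁻¹ r_I` and zero outside `I`. -/
noncomputable def thetaStar {d : ℕ} (M : Matrix (Fin d) (Fin d) ℝ) (r : Fin d → ℝ)
    (I : Finset (Fin d)) : Fin d → ℝ :=
  fun i => if h : i ∈ I then ((subMat M I)⁻¹ *ᵥ subVec r I) ⟨i, h⟩ else 0

namespace Matrix

variable {ι κ R : Type*} [Fintype ι] [Fintype κ] [CommRing R]

lemma dotProduct_mulVec_eq_sum (A : Matrix ι ι R) (u v : ι → R) :
    u ⬝ᵥ (A *ᵥ v) = ∑ i, ∑ j, u i * A i j * v j := by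
  simp [dotProduct, mulVec, Finset.mul_sum, mul_assoc]

lemma dotProduct_transpose_mul_self_mulVec (B : Matrix κ ι R) (v : ι → R) :
    v ⬝ᵥ ((Bᵀ * B) *ᵥ v) = (B *ᵥ v) ⬝ᵥ (B *ᵥ v) := by
  rw [← mulVec_mulVec, dotProduct_mulVec, vecMul_transpose]

lemma mulVec_dite_mem_apply [DecidableEq ι] (A : Matrix ι ι R) (s : Finset ι) (w : s → R)
    (i : ι) : (A *ᵥ fun j ↦ if h : j ∈ s then w ⟨j, h⟩ else 0) i = ∑ a : s, A i a * w a := by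
  simp only [mulVec, dotProduct, mul_dite, mul_zero]
  exact (Finset.sum_attach_eq_sum_dite s fun a ↦ A i a * w a).symm

variable [LinearOrder R] [IsStrictOrderedRing R]

lemma abs_dotProduct_mulVec_abs_le {A : Matrix ι ι R} (hA : Pairwise fun i j ↦ A i j ≤ 0)
    (v : ι → R) : |v| ⬝ᵥ (A *ᵥ |v|) ≤ v ⬝ᵥ (A *ᵥ v) := by
  simp only [dotProduct_mulVec_eq_sum, Pi.abs_apply]
  refine Finset.sum_le_sum fun i _ ↦ Finset.sum_le_sum fun j _ ↦ ?_
  rcases eq_or_ne i j with rfl | hij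
  · rw [mul_right_comm, abs_mul_abs_self, mul_right_comm]
  · have := mul_le_mul_of_nonpos_left (le_abs_self (v i * v j)) (hA hij)
    rw [abs_mul] at this
    linarith

lemma negPart_dotProduct_mulVec_posPart_nonpos {A : Matrix ι ι R}
    (hA : Pairwise fun i j ↦ A i j ≤ 0) (v : ι → R) : v⁻ ⬝ᵥ (A *ᵥ v⁺) ≤ 0 := by
  rw [dotProduct_mulVec_eq_sum]
  refine Finset.sum_nonpos fun i _ ↦ Finset.sum_nonpos fun j _ ↦ ?_
  rcases eq_or_ne i j with rfl | hij
  · rcases le_total (v i) 0 with h | h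
    · simp [posPart_eq_zero.2 h]
    · simp [negPart_eq_zero.2 h]
  · exact mul_nonpos_of_nonpos_of_nonneg
      (mul_nonpos_of_nonneg_of_nonpos (negPart_nonneg _) (hA hij)) (posPart_nonneg _)

lemma eq_zero_of_dotProduct_nonpos {c w : ι → R} (hc : ∀ i, 0 < c i) (hw : 0 ≤ w)
    (h : c ⬝ᵥ w ≤ 0) : w = 0 := by
  have hzero := le_antisymm h (dotProduct_nonneg_of_nonneg (fun i ↦ (hc i).le) hw)
  funext i
  have := (Finset.sum_eq_zero_iff_of_nonneg fun j _ ↦ mul_nonneg (hc j).le (hw j)).1 hzero i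
    (Finset.mem_univ i)
  exact (mul_eq_zero.1 this).resolve_left (hc i).ne'

lemma pos_of_mulVec_pos {A : Matrix ι ι R} (hA : Pairwise fun i j ↦ A i j ≤ 0) {θ : ι → R}
    (hθ : 0 ≤ θ) (hAθ : ∀ i, 0 < (A *ᵥ θ) i) (i : ι) : 0 < θ i := by
  refine (hθ i).lt_of_ne' fun hθi ↦ (hAθ i).not_ge ?_
  refine Finset.sum_nonpos fun j _ ↦ ?_
  rcases eq_or_ne i j with rfl | hij
  · simp [hθi]
  · exact mul_nonpos_of_nonpos_of_nonneg (hA hij) (hθ j)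

lemma nonneg_of_mulVec_pos {A : Matrix ι ι R} (hA : Pairwise fun i j ↦ A i j ≤ 0)
    (hpsd : ∀ v, 0 ≤ v ⬝ᵥ (A *ᵥ v)) {θ : ι → R} (hAθ : ∀ i, 0 < (A *ᵥ θ) i) : 0 ≤ θ := by
  rw [← negPart_eq_zero]
  refine eq_zero_of_dotProduct_nonpos hAθ (negPart_nonneg θ) ?_
  have hsplit : A *ᵥ θ = A *ᵥ θ⁺ - A *ᵥ θ⁻ := by rw [← mulVec_sub, posPart_sub_negPart]
  rw [dotProduct_comm, hsplit, dotProduct_sub]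
  linarith [negPart_dotProduct_mulVec_posPart_nonpos hA θ, hpsd θ⁻]

lemma dotProduct_transpose_mul_self_mulVec_nonneg (B : Matrix κ ι R) (v : ι → R) :
    0 ≤ v ⬝ᵥ ((Bᵀ * B) *ᵥ v) := by
  rw [dotProduct_transpose_mul_self_mulVec]
  exact Finset.sum_nonneg fun i _ ↦ mul_self_nonneg _

variable {K : Type*} [Field K] [LinearOrder K] [IsStrictOrderedRing K] [DecidableEq ι]
  {B : Matrix κ ι K} {y : κ → K}

lemma isUnit_transpose_mul_self (hy : ∀ i, 0 < (Bᵀ *ᵥ y) i)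
    (hA : Pairwise fun i j ↦ (Bᵀ * B) i j ≤ 0) : IsUnit (Bᵀ * B) := by
  refine (isUnit_iff_isUnit_det _).2 (isUnit_iff_ne_zero.2 fun hdet ↦ ?_)
  obtain ⟨v, hv0, hv⟩ := exists_mulVec_eq_zero_iff.2 hdet
  have hBv : B *ᵥ |v| = 0 := by
    rw [← dotProduct_self_eq_zero, ← dotProduct_transpose_mul_self_mulVec]
    refine le_antisymm ?_ (dotProduct_transpose_mul_self_mulVec_nonneg B |v|)
    simpa [hv] using abs_dotProduct_mulVec_abs_le hA v
  have hyv : (Bᵀ *ᵥ y) ⬝ᵥ |v| = 0 := by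
    rw [dotProduct_comm, dotProduct_mulVec, vecMul_transpose, hBv, zero_dotProduct]
  exact hv0 ((Pi.abs_eq_zero v).1 (eq_zero_of_dotProduct_nonpos hy (abs_nonneg v) hyv.le))

lemma inv_transpose_mul_self_mulVec_pos (hy : ∀ i, 0 < (Bᵀ *ᵥ y) i)
    (hA : Pairwise fun i j ↦ (Bᵀ * B) i j ≤ 0) (i : ι) :
    0 < ((Bᵀ * B)⁻¹ *ᵥ (Bᵀ *ᵥ y)) i := by
  have hdet := (isUnit_iff_isUnit_det _).1 (isUnit_transpose_mul_self hy hA)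
  have hsol : (Bᵀ * B) *ᵥ ((Bᵀ * B)⁻¹ *ᵥ (Bᵀ *ᵥ y)) = Bᵀ *ᵥ y := by
    rw [mulVec_mulVec, mul_nonsing_inv _ hdet, one_mulVec]
  rw [← hsol] at hy
  exact pos_of_mulVec_pos hA
    (nonneg_of_mulVec_pos hA (dotProduct_transpose_mul_self_mulVec_nonneg B) hy) hy i

end Matrix

section thetaStar

variable {d : ℕ} {M : Matrix (Fin d) (Fin d) ℝ} {r : Fin d → ℝ} {I : Finset (Fin d)}

lemma thetaStar_nonneg (h : ∀ a : I, 0 ≤ ((subMat M I)⁻¹ *ᵥ subVec r I) a) (i : Fin d) :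
    0 ≤ thetaStar M r I i := by
  unfold thetaStar
  split_ifs
  exacts [h _, le_rfl]

lemma thetaStar_pos_iff (h : ∀ a : I, 0 < ((subMat M I)⁻¹ *ᵥ subVec r I) a) (i : Fin d) :
    0 < thetaStar M r I i ↔ i ∈ I := by
  by_cases hi : i ∈ I <;> simp [thetaStar, hi, h]

lemma mulVec_thetaStar_of_mem (hunit : IsUnit (subMat M I)) {i : Fin d} (hi : i ∈ I) :
    (M *ᵥ thetaStar M r I) i = r i := by
  have hsol : subMat M I *ᵥ ((subMat M I)⁻¹ *ᵥ subVec r I) = subVec r I := by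
    rw [mulVec_mulVec, mul_nonsing_inv _ ((isUnit_iff_isUnit_det _).1 hunit), one_mulVec]
  exact (mulVec_dite_mem_apply M I _ i).trans (congrFun hsol ⟨i, hi⟩)

lemma thetaStar_mul_sub_mulVec_thetaStar_eq_zero (hunit : IsUnit (subMat M I)) (i : Fin d) :
    thetaStar M r I i * (r i - (M *ᵥ thetaStar M r I) i) = 0 := by
  by_cases hi : i ∈ I
  · rw [mulVec_thetaStar_of_mem hunit hi, sub_self, mul_zero]
  · simp [thetaStar, hi]

end thetaStar

theorem dln_fixed_point_general (n d : ℕ)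
    (X : Matrix (Fin n) (Fin d) ℝ) (y : Fin n → ℝ)
    (M : Matrix (Fin d) (Fin d) ℝ) (r : Fin d → ℝ)
    (hM : M = Xᵀ * X) (hr : r = Xᵀ *ᵥ y)
    (hA1 : ∀ i, 0 < r i)
    (hA2 : ∀ i j, i ≠ j → M i j ≤ 0)
    (I : Finset (Fin d)) :
    IsUnit (subMat M I) ∧
    (∀ a : I, 0 < ((subMat M I)⁻¹ *ᵥ subVec r I) a) ∧
    (∀ i, 0 ≤ thetaStar M r I i) ∧
    (∀ i, thetaStar M r I i * (r i - (M *ᵥ thetaStar M r I) i) = 0) ∧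
    {i : Fin d | 0 < thetaStar M r I i} = ↑I := by
  set B := X.submatrix id ((↑) : I → Fin d)
  have hMI : subMat M I = Bᵀ * B := by subst hM; ext; simp [subMat, B, mul_apply]
  have hrI : subVec r I = Bᵀ *ᵥ y := by subst hr; ext; simp [subVec, B, mulVec, dotProduct]
  have hy : ∀ a, 0 < (Bᵀ *ᵥ y) a := fun a ↦ hrI ▸ hA1 a
  have hB : Pairwise fun a b ↦ (Bᵀ * B) a b ≤ 0 :=
    fun a b hab ↦ hMI ▸ hA2 a b (Subtype.coe_injective.ne hab)
  have hunit : IsUnit (subMat M I) := hMI ▸ isUnit_transpose_mul_self hy hB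
  have hpos : ∀ a : I, 0 < ((subMat M I)⁻¹ *ᵥ subVec r I) a := by
    rw [hMI, hrI]
    exact inv_transpose_mul_self_mulVec_pos hy hB
  exact ⟨hunit, hpos, thetaStar_nonneg fun a ↦ (hpos a).le,
    thetaStar_mul_sub_mulVec_thetaStar_eq_zero hunit, Set.ext (thetaStar_pos_iff hpos)⟩

/-- Under (A1) and (A2), for every `I ⊆ {1,…,d}`, `M_{II}` is invertible,
`(M_{II})⁻¹ r_I > 0`, and `θ_*^{(I)}` is a nonnegative fixed point of the DLN vector
field `Ψ(θ)ᵢ = θᵢ (rᵢ − (Mθ)ᵢ)` with support exactly `I`. -/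
theorem dln_fixed_point (n d : ℕ) (hn : 0 < n) (hd : 0 < d)
    (X : Matrix (Fin n) (Fin d) ℝ) (y : Fin n → ℝ)
    (M : Matrix (Fin d) (Fin d) ℝ) (r : Fin d → ℝ)
    (hM : M = Xᵀ * X) (hr : r = Xᵀ *ᵥ y)
    (hA1 : ∀ i, 0 < r i)
    (hA2 : ∀ i j, i ≠ j → M i j ≤ 0)
    (I : Finset (Fin d)) :
    IsUnit (subMat M I) ∧
    (∀ a : I, 0 < ((subMat M I)⁻¹ *ᵥ subVec r I) a) ∧
    (∀ i, 0 ≤ thetaStar M r I i) ∧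
    (∀ i, thetaStar M r I i * (r i - (M *ᵥ thetaStar M r I) i) = 0) ∧
    {i : Fin d | 0 < thetaStar M r I i} = ↑I :=
  dln_fixed_point_general n d X y M r hM hr hA1 hA2 I
end

section
/- Assume (A1) r has all coordinates strictly positive and (A2) M_{ij} ≤ 0 for all i ≠ j, where M = XᵀX and r = Xᵀy. Let s_* = max_{i ∈ {1,…,d}} (M⁻¹k)_i / (M⁻¹r)_i. Then for every s > s_*, the solution θ^{(ε)} of the DLN ODE with initial condition θ_i^{(ε)}(0) = C_i ε^{k_i} satisfies θ^{(ε)}(s · log(1/ε)) → M⁻¹r as ε → 0, where M⁻¹r is the unique minimizer of f. -/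
/-!
Under (A1)–(A2) the Gram matrix `M` is a positive definite Z-matrix, so `M⁻¹ ≥ 0` entrywise and
`v = M⁻¹ r > 0`. For small `ε` the flow starts below `v` with `Mθ(0) ≤ r`; comparison for
cooperative linear systems, applied to `θ`, to `θ'` and to `v - θ`, shows that `θ` increases and
stays below `v`. The potential `p = M⁻¹ log θ` satisfies `p' = v - θ`, a nonincreasing function,
hence `(v - θ(t₂)) (t₂ - t₁) ≤ M⁻¹ log (v / θ(t₁))`. Since `log (v / θ(0)) = k log(1/ε) + O(1)`,
on `[0, s' log(1/ε)]` with `s_* < s' < s` this lifts `θ` above a fixed positive vector; on the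
remaining interval, of length `(s - s') log(1/ε)`, the right-hand side is then bounded, so
`θ(s log(1/ε)) → v`.
-/

open Matrix Set Filter Topology

theorem HasDerivAt.nonpos_of_isMinOn_Icc {f : ℝ → ℝ} {f' a b : ℝ} (hab : a < b)
    (hf : HasDerivAt f f' b) (hmin : IsMinOn f (Icc a b) b) : f' ≤ 0 := by
  have hslope : Tendsto (slope f b) (𝓝[<] b) (𝓝 f') :=
    (hasDerivAt_iff_tendsto_slope.1 hf).mono_left (nhdsWithin_mono _ fun _ ht => ne_of_lt ht)
  refine le_of_tendsto hslope ?_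
  filter_upwards [Ioo_mem_nhdsLT hab] with t ht
  rw [slope_def_field]
  exact div_nonpos_of_nonneg_of_nonpos (sub_nonneg.2 (hmin ⟨ht.1.le, ht.2.le⟩)) (by linarith [ht.2])

theorem pos_of_hasDerivAt_pos_of_eq_zero {ι : Type*} [Finite ι] {f : ι → ℝ → ℝ} {T : ℝ}
    (hf : ∀ i, ContinuousOn (f i) (Icc 0 T)) (h0 : ∀ i, 0 < f i 0)
    (hcross : ∀ t ∈ Ioc 0 T, ∀ i, (∀ j, 0 ≤ f j t) → f i t = 0 →
      ∃ f', HasDerivAt (f i) f' t ∧ 0 < f') :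
    ∀ t ∈ Icc 0 T, ∀ i, 0 < f i t := by
  by_contra! ⟨t₁, ht₁, i₁, hi₁⟩
  set S := ⋃ i, Icc 0 T ∩ f i ⁻¹' Iic 0
  have hS : IsClosed S := isClosed_iUnion_of_finite fun i =>
    (hf i).preimage_isClosed_of_isClosed isClosed_Icc isClosed_Iic
  have hSbdd : BddBelow S := ⟨0, fun t ht => by
    obtain ⟨_, hmem, _⟩ := mem_iUnion.1 ht
    exact hmem.1⟩
  obtain ⟨i, ht₀, hi⟩ := mem_iUnion.1 (hS.csInf_mem ⟨t₁, mem_iUnion.2 ⟨i₁, ht₁, hi₁⟩⟩ hSbdd)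
  set t₀ := sInf S
  have hbefore : ∀ t ∈ Ico 0 t₀, ∀ j, 0 < f j t := fun t ht j => by
    by_contra! h
    exact notMem_of_lt_csInf ht.2 hSbdd (mem_iUnion.2 ⟨j, ⟨ht.1, ht.2.le.trans ht₀.2⟩, h⟩)
  have ht₀pos : 0 < t₀ := ht₀.1.lt_of_ne fun h => (h0 i).not_ge (h ▸ hi)
  have hnonneg : ∀ j, 0 ≤ f j t₀ := fun j =>
    ContinuousWithinAt.closure_le (by rw [closure_Ico ht₀pos.ne]; exact right_mem_Icc.2 ht₀pos.le)
      continuousWithinAt_const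
      ((hf j t₀ ht₀).mono fun t ht => ⟨ht.1, ht.2.le.trans ht₀.2⟩)
      fun t ht => (hbefore t ht j).le
  have hzero : f i t₀ = 0 := le_antisymm hi (hnonneg i)
  obtain ⟨f', hf', hpos⟩ := hcross t₀ ⟨ht₀pos, ht₀.2⟩ i hnonneg hzero
  refine hpos.not_ge (hf'.nonpos_of_isMinOn_Icc ht₀pos fun t ht => ?_)
  rcases ht.2.lt_or_eq with h | h
  · simpa [hzero] using (hbefore t ⟨ht.1, h⟩ i).le
  · simp [h]

theorem nonneg_of_hasDerivAt_mulVec {ι : Type*} [Fintype ι] {A : ℝ → Matrix ι ι ℝ}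
    {u : ℝ → ι → ℝ} {T : ℝ} (hA : ContinuousOn A (Icc 0 T))
    (hoff : ∀ t ∈ Icc 0 T, ∀ i j, i ≠ j → 0 ≤ A t i j)
    (hu : ∀ t ∈ Icc 0 T, HasDerivAt u (A t *ᵥ u t) t) (hu0 : 0 ≤ u 0) :
    ∀ t ∈ Icc 0 T, 0 ≤ u t := by
  obtain ⟨K, hK⟩ := isCompact_Icc.exists_bound_of_continuousOn
    (continuousOn_pi.2 fun i => continuousOn_finsetSum _ fun j _ =>
      continuousOn_pi.1 (continuousOn_pi.1 hA i) j : ContinuousOn (fun t i => ∑ j, A t i j) _)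
  have hrow : ∀ t ∈ Icc 0 T, ∀ i, ∑ j, A t i j ≤ K := fun t ht i =>
    (le_abs_self _).trans ((norm_le_pi_norm (fun i => ∑ j, A t i j) i).trans (hK t ht))
  -- `u + δ e^{(K+1)t}` stays positive: at a first zero its derivative is at least `δ e^{(K+1)t}`
  have hpert : ∀ δ > 0, ∀ t ∈ Icc 0 T, ∀ i, 0 < u t i + δ * Real.exp ((K + 1) * t) := by
    intro δ hδ
    refine pos_of_hasDerivAt_pos_of_eq_zero (f := fun i t => u t i + δ * Real.exp ((K + 1) * t))
      (fun i t ht => ?_) (fun i => by simpa using add_pos_of_nonneg_of_pos (hu0 i) hδ) ?_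
    · exact ((hasDerivAt_pi.1 (hu t ht) i).continuousAt.add (by fun_prop)).continuousWithinAt
    intro t ht i hnonneg hzero
    set c := δ * Real.exp ((K + 1) * t)
    refine ⟨(A t *ᵥ u t) i + c * (K + 1), (hasDerivAt_pi.1 (hu t ⟨ht.1.le, ht.2⟩) i).add ?_, ?_⟩
    · exact (((hasDerivAt_id t).const_mul (K + 1)).exp.const_mul δ).congr_deriv
        (by simp only [id_eq, mul_one, c]; ring)
    · have hsplit : (A t *ᵥ u t) i = ∑ j, A t i j * (u t j + c) - c * ∑ j, A t i j := by
        rw [Finset.mul_sum]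
        simp only [mulVec, dotProduct, mul_add, Finset.sum_add_distrib, mul_comm c]
        ring
      have hcoop : 0 ≤ ∑ j, A t i j * (u t j + c) := Finset.sum_nonneg fun j _ => by
        rcases eq_or_ne i j with rfl | hij
        · simp [hzero]
        · exact mul_nonneg (hoff t ⟨ht.1.le, ht.2⟩ i j hij) (hnonneg j)
      have hc : 0 < c := by positivity
      nlinarith [hrow t ⟨ht.1.le, ht.2⟩ i]
  intro t ht i
  by_contra! hneg
  have hexp := Real.exp_pos ((K + 1) * t)
  have := hpert (-u t i / Real.exp ((K + 1) * t)) (div_pos (neg_pos.2 hneg) hexp) t ht i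
  rw [div_mul_cancel₀ _ hexp.ne'] at this
  linarith

section ZMatrix

variable {ι : Type*} [Fintype ι] {M : Matrix ι ι ℝ}

theorem dotProduct_mulVec_eq_sum_sum (x y : ι → ℝ) :
    x ⬝ᵥ (M *ᵥ y) = ∑ i, ∑ j, M i j * (x i * y j) := by
  simp only [dotProduct, mulVec, Finset.mul_sum]
  exact Finset.sum_congr rfl fun i _ => Finset.sum_congr rfl fun j _ => by ring

theorem Matrix.PosDef.nonneg_of_mulVec_nonneg (hM : M.PosDef) (hoff : ∀ i j, i ≠ j → M i j ≤ 0)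
    {u : ι → ℝ} (hu : 0 ≤ M *ᵥ u) : 0 ≤ u := by
  set up : ι → ℝ := fun i => max (u i) 0
  set un : ι → ℝ := fun i => max (-u i) 0
  have hsplit : u = up - un := funext fun i => (max_zero_sub_max_neg_zero_eq_self (u i)).symm
  -- test `M u ≥ 0` against the negative part `un` of `u`
  have hun : un = 0 := by
    by_contra hne
    have hpos : 0 < un ⬝ᵥ (M *ᵥ un) := by simpa using hM.dotProduct_mulVec_pos hne
    have hcross : un ⬝ᵥ (M *ᵥ up) ≤ 0 := by
      rw [dotProduct_mulVec_eq_sum_sum]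
      refine Finset.sum_nonpos fun i _ => Finset.sum_nonpos fun j _ => ?_
      rcases eq_or_ne i j with rfl | hij
      · rcases le_total (u i) 0 with h | h <;> simp [up, un, h]
      · exact mul_nonpos_of_nonpos_of_nonneg (hoff i j hij)
          (mul_nonneg (le_max_right _ _) (le_max_right _ _))
    have hrhs : 0 ≤ un ⬝ᵥ (M *ᵥ u) := dotProduct_nonneg_of_nonneg (fun i => le_max_right _ _) hu
    rw [hsplit, mulVec_sub, dotProduct_sub] at hrhs
    linarith
  intro i
  simpa [un] using congrFun hun i

theorem Matrix.PosDef.inv_nonneg [DecidableEq ι] (hM : M.PosDef) (hoff : ∀ i j, i ≠ j → M i j ≤ 0)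
    (i j : ι) : 0 ≤ M⁻¹ i j := by
  have hcol : 0 ≤ M⁻¹ *ᵥ Pi.single j 1 := hM.nonneg_of_mulVec_nonneg hoff <| by
    rw [mulVec_mulVec, mul_nonsing_inv _ ((isUnit_iff_isUnit_det M).1 hM.isUnit), one_mulVec]
    exact Pi.single_nonneg.2 zero_le_one
  simpa [mulVec_single_one] using hcol i

/-- A kernel vector `x` of `X` can be replaced by `|x|`, which the positive vector `Xᵀy` pairs
to zero. -/
theorem posDef_transpose_mul_self_of_offDiag_nonpos {m : Type*} [Fintype m]
    (X : Matrix m ι ℝ) (y : m → ℝ) (hr : ∀ i, 0 < (Xᵀ *ᵥ y) i)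
    (hoff : ∀ i j, i ≠ j → (Xᵀ * X) i j ≤ 0) : (Xᵀ * X).PosDef := by
  have hquad : ∀ x, x ⬝ᵥ ((Xᵀ * X) *ᵥ x) = (X *ᵥ x) ⬝ᵥ (X *ᵥ x) := fun x => by
    rw [← mulVec_mulVec, dotProduct_mulVec, vecMul_transpose]
  have hinj : Function.Injective X.mulVec := by
    refine (injective_iff_map_eq_zero (mulVecLin X)).2 fun x hx => ?_
    set a : ι → ℝ := fun i => |x i|
    have hle : a ⬝ᵥ ((Xᵀ * X) *ᵥ a) ≤ x ⬝ᵥ ((Xᵀ * X) *ᵥ x) := by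
      rw [dotProduct_mulVec_eq_sum_sum, dotProduct_mulVec_eq_sum_sum]
      refine Finset.sum_le_sum fun i _ => Finset.sum_le_sum fun j _ => ?_
      rcases eq_or_ne i j with rfl | hij
      · simp [a, abs_mul_abs_self]
      · exact mul_le_mul_of_nonpos_left ((le_abs_self _).trans_eq (abs_mul _ _)) (hoff i j hij)
    have hXa : X *ᵥ a = 0 := by
      rw [hquad, hquad, show X *ᵥ x = 0 from hx, dotProduct_zero] at hle
      exact dotProduct_self_eq_zero.1 (le_antisymm hle (dotProduct_self_star_nonneg _))
    have hra : (Xᵀ *ᵥ y) ⬝ᵥ a = 0 := by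
      rw [mulVec_transpose, ← dotProduct_mulVec, hXa, dotProduct_zero]
    funext i
    have := (Finset.sum_eq_zero_iff_of_nonneg fun j _ => mul_nonneg (hr j).le (abs_nonneg (x j))).1
      hra i (Finset.mem_univ i)
    simpa [a, (hr i).ne'] using this
  simpa using PosDef.conjTranspose_mul_self X hinj

end ZMatrix

theorem mulVec_pos_of_nonneg_of_mul_eq_one {ι : Type*} [Fintype ι] [DecidableEq ι]
    {N M : Matrix ι ι ℝ} (hN : ∀ i j, 0 ≤ N i j) (hNM : N * M = 1) {b : ι → ℝ}
    (hb : ∀ i, 0 < b i) (i : ι) : 0 < (N *ᵥ b) i := by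
  obtain ⟨j, hj⟩ : ∃ j, N i j ≠ 0 := by
    by_contra! h
    simpa [mul_apply, h] using congrFun (congrFun hNM i) i
  exact Finset.sum_pos' (fun j _ => mul_nonneg (hN i j) (hb j).le)
    ⟨j, Finset.mem_univ j, mul_pos ((hN i j).lt_of_ne' hj) (hb j)⟩

def dlnField {ι : Type*} [Fintype ι] (M : Matrix ι ι ℝ) (r x : ι → ℝ) : ι → ℝ :=
  x * (r - M *ᵥ x)

section DLN

variable {ι : Type*} [Fintype ι] [DecidableEq ι] {M : Matrix ι ι ℝ} {r : ι → ℝ}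
  {θ : ℝ → ι → ℝ} {T : ℝ}

theorem dlnField_eq_diagonal_mulVec (x : ι → ℝ) :
    dlnField M r x = diagonal (r - M *ᵥ x) *ᵥ x := by
  ext i
  simp [dlnField, mulVec_diagonal, mul_comm]

theorem HasDerivAt.dlnField {θ' : ι → ℝ} {t : ℝ} (h : HasDerivAt θ θ' t) :
    HasDerivAt (fun τ => dlnField M r (θ τ))
      ((diagonal (r - M *ᵥ θ t) - diagonal (θ t) * M) *ᵥ θ') t := by
  have hM : HasDerivAt (fun τ => M *ᵥ θ τ) (M *ᵥ θ') t :=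
    (LinearMap.toContinuousLinearMap (mulVecLin M)).hasFDerivAt.comp_hasDerivAt t h
  refine (h.fun_mul ((hasDerivAt_const t r).sub hM)).congr_deriv ?_
  ext i
  simp only [Pi.sub_apply, zero_sub, mul_neg, Pi.add_apply, Pi.mul_apply, Pi.neg_apply,
    sub_mulVec, ← mulVec_mulVec, mulVec_diagonal]
  ring

theorem dln_nonneg (hθ : ∀ t ∈ Icc 0 T, HasDerivAt θ (dlnField M r (θ t)) t) (h0 : 0 ≤ θ 0) :
    ∀ t ∈ Icc 0 T, 0 ≤ θ t :=
  nonneg_of_hasDerivAt_mulVec (A := fun t => diagonal (r - M *ᵥ θ t))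
    ((by fun_prop : Continuous fun x => diagonal (r - M *ᵥ x)).comp_continuousOn
      (HasDerivAt.continuousOn hθ))
    (fun t _ i j hij => (diagonal_apply_ne _ hij).ge)
    (fun t ht => dlnField_eq_diagonal_mulVec (M := M) (r := r) (θ t) ▸ hθ t ht) h0

theorem dlnField_nonneg (hoff : ∀ i j, i ≠ j → M i j ≤ 0)
    (hθ : ∀ t ∈ Icc 0 T, HasDerivAt θ (dlnField M r (θ t)) t) (h0 : 0 ≤ θ 0)
    (hr0 : M *ᵥ θ 0 ≤ r) : ∀ t ∈ Icc 0 T, 0 ≤ dlnField M r (θ t) := by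
  have hθ0 := dln_nonneg hθ h0
  refine nonneg_of_hasDerivAt_mulVec
    (A := fun t => diagonal (r - M *ᵥ θ t) - diagonal (θ t) * M) ?_ ?_
    (fun t ht => (hθ t ht).dlnField) (mul_nonneg h0 (sub_nonneg.2 hr0))
  · exact (by fun_prop : Continuous fun x => diagonal (r - M *ᵥ x) - diagonal x * M)
      |>.comp_continuousOn (HasDerivAt.continuousOn hθ)
  · intro t ht i j hij
    simpa [diagonal_apply_ne _ hij] using mul_nonpos_of_nonneg_of_nonpos (hθ0 t ht i) (hoff i j hij)

theorem dln_monotoneOn (hoff : ∀ i j, i ≠ j → M i j ≤ 0)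
    (hθ : ∀ t ∈ Icc 0 T, HasDerivAt θ (dlnField M r (θ t)) t) (h0 : 0 ≤ θ 0)
    (hr0 : M *ᵥ θ 0 ≤ r) : MonotoneOn θ (Icc 0 T) := fun _ ha _ hb hab i =>
  monotoneOn_of_hasDerivWithinAt_nonneg (convex_Icc 0 T)
    (continuousOn_pi.1 (HasDerivAt.continuousOn hθ) i)
    (fun t ht => (hasDerivAt_pi.1 (hθ t (interior_subset ht)) i).hasDerivWithinAt)
    (fun t ht => dlnField_nonneg hoff hθ h0 hr0 t (interior_subset ht) i) ha hb hab

theorem dln_le (hoff : ∀ i j, i ≠ j → M i j ≤ 0)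
    (hθ : ∀ t ∈ Icc 0 T, HasDerivAt θ (dlnField M r (θ t)) t) (h0 : 0 ≤ θ 0)
    {v : ι → ℝ} (hv : M *ᵥ v = r) (hv0 : θ 0 ≤ v) : ∀ t ∈ Icc 0 T, θ t ≤ v := by
  have hθ0 := dln_nonneg hθ h0
  refine fun t ht => sub_nonneg.1 (nonneg_of_hasDerivAt_mulVec (u := fun t => v - θ t)
    (A := fun t => -(diagonal (θ t) * M)) ?_ ?_ (fun t ht => ?_) (sub_nonneg.2 hv0) t ht)
  · exact (by fun_prop : Continuous fun x : ι → ℝ => -(diagonal x * M)).comp_continuousOn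
      (HasDerivAt.continuousOn hθ)
  · intro t ht i j hij
    simpa [diagonal_apply_ne _ hij] using mul_nonpos_of_nonneg_of_nonpos (hθ0 t ht i) (hoff i j hij)
  · refine ((hasDerivAt_const t v).sub (hθ t ht)).congr_deriv ?_
    ext i
    simp only [dlnField, ← hv, Pi.sub_apply, Pi.zero_apply, Pi.mul_apply, zero_sub, mulVec_sub,
      neg_mulVec, ← mulVec_mulVec, Pi.neg_apply, mulVec_diagonal, sub_neg_eq_add]
    ring

theorem hasDerivAt_sum_mul_log_dln {N : Matrix ι ι ℝ} (hNM : N * M = 1) {v : ι → ℝ}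
    (hv : M *ᵥ v = r) {t : ℝ} (ht : HasDerivAt θ (dlnField M r (θ t)) t) (hpos : ∀ j, 0 < θ t j)
    (i : ι) : HasDerivAt (fun τ => ∑ j, N i j * Real.log (θ τ j)) (v i - θ t i) t := by
  refine (HasDerivAt.fun_sum fun j _ =>
    ((hasDerivAt_pi.1 ht j).log (hpos j).ne').const_mul (N i j)).congr_deriv ?_
  have hlog : ∀ j, dlnField M r (θ t) j / θ t j = (r - M *ᵥ θ t) j :=
    fun j => mul_div_cancel_left₀ _ (hpos j).ne'
  have hN : N *ᵥ (r - M *ᵥ θ t) = v - θ t := by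
    rw [mulVec_sub, ← hv, mulVec_mulVec, mulVec_mulVec, hNM, one_mulVec, one_mulVec]
  simp only [hlog]
  exact congrFun hN i

theorem dln_gap_le (hoff : ∀ i j, i ≠ j → M i j ≤ 0)
    (hθ : ∀ t ∈ Icc 0 T, HasDerivAt θ (dlnField M r (θ t)) t) (h0 : ∀ i, 0 < θ 0 i)
    (hr0 : M *ᵥ θ 0 ≤ r) {v : ι → ℝ} (hv : M *ᵥ v = r) (hv0 : θ 0 ≤ v) {N : Matrix ι ι ℝ}
    (hNM : N * M = 1) (hN : ∀ i j, 0 ≤ N i j) {t₁ t₂ : ℝ} (ht₁ : 0 ≤ t₁) (ht₁₂ : t₁ ≤ t₂)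
    (ht₂ : t₂ ≤ T) (i : ι) :
    (v i - θ t₂ i) * (t₂ - t₁) ≤ ∑ j, N i j * Real.log (v j / θ t₁ j) := by
  have hmono := dln_monotoneOn hoff hθ (fun i => (h0 i).le) hr0
  have hle := dln_le hoff hθ (fun i => (h0 i).le) hv hv0
  have hsub : Icc t₁ t₂ ⊆ Icc 0 T := Icc_subset_Icc ht₁ ht₂
  have hpos : ∀ t ∈ Icc t₁ t₂, ∀ j, 0 < θ t j := fun t ht j =>
    (h0 j).trans_le (hmono (left_mem_Icc.2 (ht₁.trans (ht₁₂.trans ht₂))) (hsub ht) (hsub ht).1 j)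
  have hp : ∀ t ∈ Icc t₁ t₂,
      HasDerivAt (fun τ => ∑ j, N i j * Real.log (θ τ j)) (v i - θ t i) t :=
    fun t ht => hasDerivAt_sum_mul_log_dln hNM hv (hθ t (hsub ht)) (hpos t ht) i
  have hint := (convex_Icc t₁ t₂).mul_sub_le_image_sub_of_le_deriv (HasDerivAt.continuousOn hp)
    (fun t ht => (hp t (interior_subset ht)).differentiableAt.differentiableWithinAt)
    (C := v i - θ t₂ i) (fun t ht => by
      rw [(hp t (interior_subset ht)).deriv]
      linarith [hmono (hsub (interior_subset ht)) (hsub (right_mem_Icc.2 ht₁₂))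
        (interior_subset ht).2 i])
    t₁ (left_mem_Icc.2 ht₁₂) t₂ (right_mem_Icc.2 ht₁₂) ht₁₂
  refine hint.trans ?_
  rw [← Finset.sum_sub_distrib]
  refine Finset.sum_le_sum fun j _ => ?_
  have h₁ := hpos t₁ (left_mem_Icc.2 ht₁₂) j
  have h₂ := hpos t₂ (right_mem_Icc.2 ht₁₂) j
  rw [← mul_sub, Real.log_div (h₂.trans_le (hle t₂ (hsub (right_mem_Icc.2 ht₁₂)) j)).ne' h₁.ne']
  exact mul_le_mul_of_nonneg_left (by
    linarith [Real.log_le_log h₂ (hle t₂ (hsub (right_mem_Icc.2 ht₁₂)) j)]) (hN i j)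

end DLN

theorem tendsto_log_one_div_nhdsGT_zero :
    Tendsto (fun ε : ℝ => Real.log (1 / ε)) (𝓝[>] 0) atTop := by
  simp only [one_div, Real.log_inv]
  exact tendsto_neg_atBot_atTop.comp Real.tendsto_log_nhdsGT_zero

theorem eventually_lt_of_sub_mul_le {α : Type*} {l : Filter α} {φ L : α → ℝ}
    (hL : Tendsto L l atTop) {v A B c m : ℝ} (hc : 0 < c) (hm : m < v - B / c)
    (h : ∀ᶠ x in l, (v - φ x) * (c * L x) ≤ A + B * L x) : ∀ᶠ x in l, m < φ x := by
  have hsmall : Tendsto (fun x => A / (c * L x)) l (𝓝 0) :=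
    tendsto_const_nhds.div_atTop (hL.const_mul_atTop hc)
  filter_upwards [h, hsmall.eventually (gt_mem_nhds (sub_pos.2 hm)), hL.eventually_gt_atTop 0]
    with x hx hxA hxL
  have hcL : 0 < c * L x := mul_pos hc hxL
  have : v - φ x ≤ A / (c * L x) + B / c := by
    rw [div_add_div _ _ hcL.ne' hc.ne', le_div_iff₀ (mul_pos hcL hc)]
    nlinarith [mul_le_mul_of_nonneg_right hx hc.le]
  linarith

theorem tendsto_mul_rpow_nhdsGT_zero {ι : Type*} {C k : ι → ℝ} (hk : ∀ i, 0 < k i) :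
    Tendsto (fun ε : ℝ => fun i => C i * ε ^ k i) (𝓝[>] 0) (𝓝 0) := by
  refine tendsto_pi_nhds.2 fun i => ?_
  have h := ((Real.continuousAt_rpow_const 0 (k i) (Or.inr (hk i).le)).tendsto.mono_left
    (nhdsWithin_le_nhds (s := Ioi 0))).const_mul (C i)
  rwa [Real.zero_rpow (hk i).ne', mul_zero] at h

/-- What integrating `p' = v - φ` for the potential `p = N log φ` gives when `φ` is increasing
and bounded by `v`. -/
def GapEstimate {ι : Type*} [Fintype ι] (N : Matrix ι ι ℝ) (v : ι → ℝ) (φ : ℝ → ι → ℝ) : Prop :=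
  ∀ t₁ t₂, 0 ≤ t₁ → t₁ ≤ t₂ → ∀ i,
    φ t₂ i ≤ v i ∧ (v i - φ t₂ i) * (t₂ - t₁) ≤ ∑ j, N i j * Real.log (v j / φ t₁ j)

section Family

variable {ι : Type*} [Fintype ι] {M N : Matrix ι ι ℝ} {r v C k : ι → ℝ} {θ : ℝ → ℝ → ι → ℝ}

theorem eventually_gapEstimate_dln [DecidableEq ι] (hoff : ∀ i j, i ≠ j → M i j ≤ 0)
    (hr : ∀ i, 0 < r i) (hv : M *ᵥ v = r) (hvpos : ∀ i, 0 < v i) (hNM : N * M = 1) (hN : ∀ i j, 0 ≤ N i j)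
    (hC : ∀ i, 0 < C i) (hk : ∀ i, 0 < k i)
    (hinit : ∀ ε ∈ Ioc (0 : ℝ) 1, ∀ i, θ ε 0 i = C i * ε ^ k i)
    (hode : ∀ ε ∈ Ioc (0 : ℝ) 1, ∀ t ≥ (0 : ℝ), HasDerivAt (θ ε) (dlnField M r (θ ε t)) t) :
    ∀ᶠ ε in 𝓝[>] 0, GapEstimate N v (θ ε) := by
  have hlim := tendsto_mul_rpow_nhdsGT_zero (C := C) hk
  have hMlim : Tendsto (fun ε : ℝ => M *ᵥ fun i => C i * ε ^ k i) (𝓝[>] 0) (𝓝 0) := by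
    simpa [Function.comp_def] using
      ((continuous_const.matrix_mulVec continuous_id : Continuous fun x : ι → ℝ => M *ᵥ x).tendsto
        0).comp hlim
  filter_upwards [Ioo_mem_nhdsGT one_pos, self_mem_nhdsWithin,
    eventually_all.2 fun i => (tendsto_pi_nhds.1 hMlim i).eventually_le_const (hr i),
    eventually_all.2 fun i => (tendsto_pi_nhds.1 hlim i).eventually_le_const (hvpos i)]
    with ε hε hε0 hr0 hv0 t₁ t₂ ht₁ ht₁₂ i
  have hε' : ε ∈ Ioc (0 : ℝ) 1 := ⟨hε0, hε.2.le⟩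
  have h0 : θ ε 0 = fun i => C i * ε ^ k i := funext (hinit ε hε')
  have hθ : ∀ t ∈ Icc 0 t₂, HasDerivAt (θ ε) (dlnField M r (θ ε t)) t :=
    fun t ht => hode ε hε' t ht.1
  have h0pos : ∀ i, 0 < θ ε 0 i := fun i => h0 ▸ mul_pos (hC i) (Real.rpow_pos_of_pos hε0 _)
  exact ⟨dln_le hoff hθ (fun i => (h0pos i).le) hv (h0 ▸ hv0) t₂
      ⟨ht₁.trans ht₁₂, le_rfl⟩ i,
    dln_gap_le hoff hθ h0pos (h0 ▸ hr0) hv (h0 ▸ hv0) hNM hN ht₁ ht₁₂ le_rfl i⟩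

theorem sum_mul_log_div_mul_rpow {ε : ℝ} (hε : 0 < ε) (hv : ∀ i, 0 < v i) (hC : ∀ i, 0 < C i)
    (i : ι) : ∑ j, N i j * Real.log (v j / (C j * ε ^ k j)) =
      ∑ j, N i j * Real.log (v j / C j) + (N *ᵥ k) i * Real.log (1 / ε) := by
  have hlog : ∀ j, Real.log (v j / (C j * ε ^ k j)) =
      Real.log (v j / C j) + k j * Real.log (1 / ε) := fun j => by
    rw [Real.log_div (hv j).ne' (mul_pos (hC j) (Real.rpow_pos_of_pos hε _)).ne',
      Real.log_mul (hC j).ne' (Real.rpow_pos_of_pos hε _).ne', Real.log_rpow hε,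
      Real.log_div (hv j).ne' (hC j).ne', one_div, Real.log_inv]
    ring
  simp only [hlog, mul_add, Finset.sum_add_distrib, mulVec, dotProduct,
    Finset.sum_mul, mul_assoc]

theorem eventually_lt_dln_first_phase (hv : ∀ i, 0 < v i) (hC : ∀ i, 0 < C i)
    (hinit : ∀ ε ∈ Ioc (0 : ℝ) 1, ∀ i, θ ε 0 i = C i * ε ^ k i)
    (hgap : ∀ᶠ ε in 𝓝[>] 0, GapEstimate N v (θ ε)) {s' m : ℝ} (hs' : 0 < s') {i : ι}
    (hm : m < v i - (N *ᵥ k) i / s') :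
    ∀ᶠ ε in 𝓝[>] 0, m < θ ε (s' * Real.log (1 / ε)) i := by
  have hL := tendsto_log_one_div_nhdsGT_zero
  refine eventually_lt_of_sub_mul_le hL hs' hm (A := ∑ j, N i j * Real.log (v j / C j)) ?_
  filter_upwards [hgap, hL.eventually_ge_atTop 0, Ioo_mem_nhdsGT one_pos]
    with ε hgapε hL0 hε
  have h0 : θ ε 0 = fun j => C j * ε ^ k j := funext (hinit ε ⟨hε.1, hε.2.le⟩)
  have := (hgapε 0 (s' * Real.log (1 / ε)) le_rfl (by positivity) i).2
  rwa [sub_zero, h0, sum_mul_log_div_mul_rpow hε.1 hv hC] at this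

theorem eventually_lt_dln_second_phase (hN : ∀ i j, 0 ≤ N i j)
    (hgap : ∀ᶠ ε in 𝓝[>] 0, GapEstimate N v (θ ε)) {a : ι → ℝ} (ha : ∀ i, 0 < a i) {s' s : ℝ}
    (hs' : 0 ≤ s') (hs's : s' < s)
    (hfirst : ∀ᶠ ε in 𝓝[>] 0, ∀ i, a i < θ ε (s' * Real.log (1 / ε)) i)
    {i : ι} {m : ℝ} (hm : m < v i) :
    ∀ᶠ ε in 𝓝[>] 0, m < θ ε (s * Real.log (1 / ε)) i := by
  have hL := tendsto_log_one_div_nhdsGT_zero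
  refine eventually_lt_of_sub_mul_le hL (sub_pos.2 hs's) (by simpa using hm)
    (A := ∑ j, N i j * Real.log (v j / a j)) (B := 0) ?_
  filter_upwards [hgap, hfirst, hL.eventually_ge_atTop 0] with ε hgapε hfirstε hL0
  have hgap₂ := (hgapε (s' * Real.log (1 / ε)) (s * Real.log (1 / ε)) (by positivity)
    (mul_le_mul_of_nonneg_right hs's.le hL0) i).2
  rw [← sub_mul] at hgap₂
  rw [zero_mul, add_zero]
  refine hgap₂.trans (Finset.sum_le_sum fun j _ => mul_le_mul_of_nonneg_left ?_ (hN i j))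
  have hθ := (ha j).trans (hfirstε j)
  have hvj := hθ.trans_le (hgapε 0 (s' * Real.log (1 / ε)) le_rfl (by positivity) j).1
  exact Real.log_le_log (div_pos hvj hθ) (div_le_div_of_nonneg_left hvj.le (ha j) (hfirstε j).le)

theorem tendsto_dln [DecidableEq ι] (hM : M.PosDef) (hoff : ∀ i j, i ≠ j → M i j ≤ 0)
    (hr : ∀ i, 0 < r i) (hC : ∀ i, 0 < C i) (hk : ∀ i, 0 < k i)
    (hinit : ∀ ε ∈ Ioc (0 : ℝ) 1, ∀ i, θ ε 0 i = C i * ε ^ k i)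
    (hode : ∀ ε ∈ Ioc (0 : ℝ) 1, ∀ t ≥ (0 : ℝ), HasDerivAt (θ ε) (dlnField M r (θ ε t)) t)
    {s : ℝ} (hs : ⨆ i, (M⁻¹ *ᵥ k) i / (M⁻¹ *ᵥ r) i < s) :
    Tendsto (fun ε => θ ε (s * Real.log (1 / ε))) (𝓝[>] 0) (𝓝 (M⁻¹ *ᵥ r)) := by
  rcases isEmpty_or_nonempty ι with hι | ⟨⟨i₀⟩⟩
  · exact tendsto_pi_nhds.2 fun i => isEmptyElim i
  have hdet := (isUnit_iff_isUnit_det M).1 hM.isUnit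
  have hNM : M⁻¹ * M = 1 := nonsing_inv_mul M hdet
  have hN : ∀ i j, 0 ≤ M⁻¹ i j := hM.inv_nonneg hoff
  set v := M⁻¹ *ᵥ r
  have hv : M *ᵥ v = r := by rw [mulVec_mulVec, mul_nonsing_inv M hdet, one_mulVec]
  have hvpos := mulVec_pos_of_nonneg_of_mul_eq_one hN hNM hr
  obtain ⟨s', hs', hs's⟩ := exists_between hs
  have hratio : ∀ i, (M⁻¹ *ᵥ k) i / v i < s' :=
    fun i => (le_ciSup (finite_range _).bddAbove i).trans_lt hs'
  have hs'0 : 0 < s' :=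
    (div_pos (mulVec_pos_of_nonneg_of_mul_eq_one hN hNM hk i₀) (hvpos i₀)).trans (hratio i₀)
  have hβ : ∀ i, 0 < v i - (M⁻¹ *ᵥ k) i / s' := fun i => by
    rw [sub_pos, div_lt_iff₀ hs'0, mul_comm]
    exact (div_lt_iff₀ (hvpos i)).1 (hratio i)
  have hgap := eventually_gapEstimate_dln hoff hr hv hvpos hNM hN hC hk hinit hode
  have hfirst := eventually_all.2 fun i =>
    eventually_lt_dln_first_phase hvpos hC hinit hgap hs'0 (half_lt_self (hβ i))
  refine tendsto_pi_nhds.2 fun i => tendsto_order.2 ⟨fun m hm =>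
    eventually_lt_dln_second_phase hN hgap (fun j => half_pos (hβ j)) hs'0.le hs's hfirst hm,
    fun m hm => ?_⟩
  filter_upwards [hgap, tendsto_log_one_div_nhdsGT_zero.eventually_ge_atTop 0] with ε hε hL
  exact (hε 0 _ le_rfl (mul_nonneg (hs'0.trans hs's).le hL) i).1.trans_lt hm

end Family

theorem dln_convergence_to_minimizer_general (n d : ℕ)
    (X : Matrix (Fin n) (Fin d) ℝ) (y : Fin n → ℝ)
    (M : Matrix (Fin d) (Fin d) ℝ) (r : Fin d → ℝ)
    (hM : M = Xᵀ * X) (hr : r = Xᵀ *ᵥ y)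
    (hA1 : ∀ i, 0 < r i)
    (hA2 : ∀ i j, i ≠ j → M i j ≤ 0)
    (C k : Fin d → ℝ) (hC : ∀ i, 0 < C i) (hk : ∀ i, 0 < k i)
    (θ : ℝ → ℝ → Fin d → ℝ)
    (hθinit : ∀ ε ∈ Set.Ioc (0 : ℝ) 1, ∀ i, θ ε 0 i = C i * ε ^ k i)
    (hθode : ∀ ε ∈ Set.Ioc (0 : ℝ) 1, ∀ t ≥ (0 : ℝ), ∀ i,
      HasDerivAt (fun τ => θ ε τ i) (θ ε t i * (r i - (M *ᵥ θ ε t) i)) t) :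
    ∀ s : ℝ, (⨆ i : Fin d, (M⁻¹ *ᵥ k) i / (M⁻¹ *ᵥ r) i) < s →
      Filter.Tendsto (fun ε => θ ε (s * Real.log (1 / ε)))
        (nhdsWithin 0 (Set.Ioi 0)) (nhds (M⁻¹ *ᵥ r)) := by
  intro s hs
  subst hM hr
  exact tendsto_dln (posDef_transpose_mul_self_of_offDiag_nonpos X y hA1 hA2) hA2 hA1 hC hk
    hθinit (fun ε hε t ht => hasDerivAt_pi.2 (hθode ε hε t ht)) hs

/-- Under (A1) and (A2), for every `s > s_* = maxᵢ (M⁻¹k)ᵢ / (M⁻¹r)ᵢ`,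
the DLN trajectory satisfies `θ^{(ε)}(s log(1/ε)) → M⁻¹r` as `ε → 0⁺`, where `M⁻¹r` is
the unique minimizer of `f`. -/
theorem dln_convergence_to_minimizer (n d : ℕ) (hn : 0 < n) (hd : 0 < d)
    (X : Matrix (Fin n) (Fin d) ℝ) (y : Fin n → ℝ)
    (M : Matrix (Fin d) (Fin d) ℝ) (r : Fin d → ℝ)
    (hM : M = Xᵀ * X) (hr : r = Xᵀ *ᵥ y)
    (hA1 : ∀ i, 0 < r i)
    (hA2 : ∀ i j, i ≠ j → M i j ≤ 0)
    (C k : Fin d → ℝ) (hC : ∀ i, 0 < C i) (hk : ∀ i, 0 < k i)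
    (θ : ℝ → ℝ → Fin d → ℝ)
    (hθinit : ∀ ε ∈ Set.Ioc (0 : ℝ) 1, ∀ i, θ ε 0 i = C i * ε ^ k i)
    (hθode : ∀ ε ∈ Set.Ioc (0 : ℝ) 1, ∀ t ≥ (0 : ℝ), ∀ i,
      HasDerivAt (fun τ => θ ε τ i) (θ ε t i * (r i - (M *ᵥ θ ε t) i)) t) :
    ∀ s : ℝ, (⨆ i : Fin d, (M⁻¹ *ᵥ k) i / (M⁻¹ *ᵥ r) i) < s →
      Filter.Tendsto (fun ε => θ ε (s * Real.log (1 / ε)))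
        (nhdsWithin 0 (Set.Ioi 0)) (nhds (M⁻¹ *ᵥ r)) :=
  dln_convergence_to_minimizer_general n d X y M r hM hr hA1 hA2 C k hC hk θ hθinit hθode
end
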